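/- If x, y, z are almost even strings, then x is a (contiguous) substring of byz if and only if x = byz, or x is a substring of y, or x is a substring of z. -/
import Mathlib


inductive Letter : Type
  | a | b
deriving DecidableEq

open Letter

def alpha (x : List Letter) : ℕ := x.count Letter.a
def beta (x : List Letter) : ℕ := x.count Letter.b

/-- x is "almost even": nonempty, α(x) = β(x)+1, and every proper prefix u has α(u) ≤ β(u). -/
def AE (x : List Letter) : Prop :=
  x ≠ [] ∧ alpha x = beta x + 1 ∧ ∀ u : List Letter, u <+: x → u ≠ x → alpha u ≤ beta u

def bal (u : List Letter) : ℤ := (beta u : ℤ) - (alpha u : ℤ)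

lemma bal_append (u v : List Letter) : bal (u ++ v) = bal u + bal v := by
  simp [bal, alpha, beta, List.count_append]; ring

lemma AE.bal_eq {x : List Letter} (h : AE x) : bal x = -1 := by
  obtain ⟨-, h2, -⟩ := h
  simp [bal, h2]

lemma AE.bal_prefix {x u : List Letter} (h : AE x) (hu : u <+: x) (hne : u ≠ x) :
    0 ≤ bal u := by
  have := h.2.2 u hu hne
  simp [bal]
  exact_mod_cast this

theorem stmt6 (x y z : List Letter) (hx : AE x) (hy : AE y) (hz : AE z) :
    x <:+: (Letter.b :: (y ++ z)) ↔ x = Letter.b :: (y ++ z) ∨ x <:+: y ∨ x <:+: z := by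
  constructor
  · rintro ⟨s, t, hst⟩
    match s, hst with
    | [], hst =>
      -- x is a prefix of b :: (y ++ z)
      simp only [List.nil_append] at hst
      by_cases hxe : x = Letter.b :: (y ++ z)
      · exact Or.inl hxe
      · exfalso
        -- x is a proper prefix of the whole word w, which is AE, so bal x ≥ 0, contradiction
        have hw : AE (Letter.b :: (y ++ z)) := by
          constructor
          · simp
          constructor
          · have hya := hy.2.1; have hza := hz.2.1
            simp [alpha, beta, List.count_cons, List.count_append] at *
            omega
          · intro u hu hune
            by_cases hu0 : u = []
            · simp [hu0, alpha, beta]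
            · obtain ⟨c, u', rfl⟩ : ∃ c u', u = c :: u' := by
                cases u with
                | nil => exact absurd rfl hu0
                | cons c u' => exact ⟨c, u', rfl⟩
              obtain ⟨v, hv⟩ := hu
              rw [List.cons_append] at hv
              injection hv with h1 h2
              subst h1
              have hu' : u' <+: y ++ z := ⟨v, h2⟩
              have hune' : u' ≠ y ++ z := fun h => hune (by rw [h])
              -- bal u' ≥ -1
              have hbal : -1 ≤ bal u' := by
                rcases List.prefix_or_prefix_of_prefix (List.prefix_append y z) hu' with h | h
                · -- y <+: u'
                  obtain ⟨v', rfl⟩ := h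
                  have hv' : v' <+: z := (List.prefix_append_right_inj y).mp hu'
                  have hv'ne : v' ≠ z := fun hh => hune' (by rw [hh])
                  have h1 := hz.bal_prefix hv' hv'ne
                  rw [bal_append, hy.bal_eq]
                  omega
                · -- u' <+: y
                  rcases eq_or_ne u' y with rfl | hne2
                  · rw [hy.bal_eq]
                  · have := hy.bal_prefix h hne2
                    omega
              simp only [bal] at hbal
              simp [alpha, beta, List.count_cons] at hbal ⊢
              omega
        have : 0 ≤ bal x := hw.bal_prefix ⟨t, hst⟩ hxe
        rw [hx.bal_eq] at this; omega
    | Letter.b :: s', hst =>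
      right
      simp only [List.cons_append, List.append_assoc] at hst
      injection hst with h1 hst
      -- s' ++ (x ++ t) = y ++ z
      rcases List.append_eq_append_iff.mp hst with ⟨r, hyr, hxt⟩ | ⟨c, hsc, hzc⟩
      · -- y = s' ++ r, x ++ t = r ++ z
        rcases List.append_eq_append_iff.mp hxt with ⟨q, hrq, htq⟩ | ⟨q, hxq, hzq⟩
        · -- r = x ++ q : x infix of y
          left; exact ⟨s', q, by rw [hyr, hrq, List.append_assoc]⟩
        · -- x = r ++ q, z = q ++ t
          rcases eq_or_ne r [] with rfl | hr
          · right; exact ⟨[], t, by simp [hxq, hzq]⟩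
          rcases eq_or_ne q [] with rfl | hq
          · left; exact ⟨s', [], by simp [hyr, hxq]⟩
          · exfalso
            have hs' : 0 ≤ bal s' := by
              refine hy.bal_prefix ⟨r, hyr.symm⟩ ?_
              intro h; rw [h] at hyr
              exact hr (by simpa using hyr)
            have hry : bal s' + bal r = -1 := by
              rw [← bal_append, ← hyr, hy.bal_eq]
            have hrx : 0 ≤ bal r := by
              refine hx.bal_prefix ⟨q, hxq.symm⟩ ?_
              intro h; rw [h] at hxq
              exact hq (by simpa using hxq)
            omega
      · -- s' = y ++ c, z = c ++ (x ++ t) : x infix of z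
        right; exact ⟨c, t, by rw [hzc, List.append_assoc]⟩
    | Letter.a :: s', hst => simp at hst
  · rintro (rfl | h | h)
    · exact List.infix_refl _
    · exact h.trans ⟨[Letter.b], z, rfl⟩
    · exact h.trans ⟨Letter.b :: y, [], by simp⟩
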